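/- arXiv:2311.13034 — 3 statements merged into one kernel-verified Lean document; each statement's English description precedes it below -/
import Mathlib

section
/- Fix integers k ≥ 1 and n ≥ k+2, a radius r > 0, and a probability vector ρ = (p_1, p_2, …). Let T̃_{k+1}(ρ) be the number of (k+2)-element subsets of {X_1,…,X_n} whose spanned subcomplex in R(n,r,ρ) is isomorphic to the boundary ∂Δ^{k+1} of the (k+1)-dimensional simplex (the complex on k+2 vertices whose faces are all proper subsets), and let T̃_{k+1} be the number of (k+2)-element subsets of {X_1,…,X_n} whose points are pairwise at distance at most r (i.e., which span a full (k+1)-simplex in R(n,r)). Then E(T̃_{k+1}(ρ)) = (1 − p_{k+1}) · ∏_{i=1}^{k} p_i^{C(k+2, i+1)} · E(T̃_{k+1}). -/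
open MeasureTheory Filter Metric Asymptotics ProbabilityTheory
open scoped Classical ENNReal

noncomputable section

/-- Euclidean space `ℝ^d`. -/
abbrev Euc (d : ℕ) : Type := EuclideanSpace ℝ (Fin d)

/-- The law of a single point with probability density `f`. -/
def densMeasure (d : ℕ) (f : Euc d → ℝ) : Measure (Euc d) :=
  volume.withDensity fun x => ENNReal.ofReal (f x)

/-- The joint law of `n` i.i.d. points with density `f`. -/
def ptsMeasure (d : ℕ) (f : Euc d → ℝ) (n : ℕ) : Measure (Fin n → Euc d) :=
  Measure.pi fun _ => densMeasure d f

/-- Čech face predicate at scale `r`: the closed balls of radius `r/2` around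
the points indexed by `s` have a common point. -/
def cechFace {d : ℕ} {ι : Type} (p : ι → Euc d) (r : ℝ) (s : Finset ι) : Prop :=
  ∃ z : Euc d, ∀ i ∈ s, dist z (p i) ≤ r / 2

/-- Vietoris–Rips face predicate at scale `r`: the points indexed by `s` are
pairwise at distance at most `r`. -/
def ripsFace {d : ℕ} {ι : Type} (p : ι → Euc d) (r : ℝ) (s : Finset ι) : Prop :=
  ∀ i ∈ s, ∀ j ∈ s, dist (p i) (p j) ≤ r

/-- Faces of the soft random complex obtained from the (downward closed) face
predicate `C` and the retention coins `u` : a set `σ` is a face iff it is a face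
of `C` and every subset of `σ` with at least two elements has been retained. -/
def softFace {ι : Type} (C : Finset ι → Prop) (u : Finset ι → Bool) (σ : Finset ι) : Prop :=
  C σ ∧ ∀ τ ⊆ σ, 2 ≤ τ.card → u τ = true

/-- Bernoulli measure on `Bool` with success probability `p`. -/
def bern (p : ℝ) : Measure Bool :=
  ENNReal.ofReal p • Measure.dirac true + ENNReal.ofReal (1 - p) • Measure.dirac false

/-- Joint law of the `n` points and of the independent retention coins `U_σ`,
where `P (U_σ = 1) = ρ (|σ| - 1)`. -/
def softMeasure (d : ℕ) (f : Euc d → ℝ) (n : ℕ) (ρ : ℕ → ℝ) :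
    Measure ((Fin n → Euc d) × (Finset (Fin n) → Bool)) :=
  (ptsMeasure d f n).prod (Measure.pi fun σ : Finset (Fin n) => bern (ρ (σ.card - 1)))

/-- The subcomplex of the complex `C` spanned by the vertex set `S` is
isomorphic to the abstract complex `Xf` on `Fin k`. -/
def spannedIso {k n : ℕ} (Xf : Finset (Fin k) → Prop)
    (C : Finset (Fin n) → Prop) (S : Finset (Fin n)) : Prop :=
  ∃ g : Fin k ↪ Fin n, Finset.univ.map g = S ∧
    ∀ s : Finset (Fin k), Xf s ↔ C (s.map g)

/-- `S` is a union of connected components of the complex `C` : no face of `C`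
meets both `S` and its complement. -/
def isComponent {n : ℕ} (C : Finset (Fin n) → Prop) (S : Finset (Fin n)) : Prop :=
  ∀ t : Finset (Fin n), C t → (∃ i ∈ t, i ∈ S) → (∃ j ∈ t, j ∉ S) → False

/-- Number of vertex subsets whose spanned subcomplex in `C` is isomorphic to `Xf`. -/
def countIso {k n : ℕ} (Xf : Finset (Fin k) → Prop) (C : Finset (Fin n) → Prop) : ℕ :=
  Set.ncard {S : Finset (Fin n) | spannedIso Xf C S}

/-- Number of connected components of `C` isomorphic to `Xf`. -/
def countCompIso {k n : ℕ} (Xf : Finset (Fin k) → Prop) (C : Finset (Fin n) → Prop) : ℕ :=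
  Set.ncard {S : Finset (Fin n) | spannedIso Xf C S ∧ isComponent C S}

/-- `fcount Xf i` is the number of `i`-dimensional faces of `Xf`. -/
def fcount {k : ℕ} (Xf : Finset (Fin k) → Prop) (i : ℕ) : ℕ :=
  Set.ncard {s : Finset (Fin k) | Xf s ∧ s.card = i + 1}

/-- `ecount Yhat Yf i` is the number of `i`-dimensional faces of `Yhat` which are not
faces of `Yf` but all of whose proper subsets with at least two elements are faces of `Yf`. -/
def ecount {k : ℕ} (Yhat Yf : Finset (Fin k) → Prop) (i : ℕ) : ℕ :=
  Set.ncard {s : Finset (Fin k) | Yhat s ∧ ¬ Yf s ∧ s.card = i + 1 ∧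
    ∀ t ⊂ s, 2 ≤ t.card → Yf t}

/-- The 1-skeleton graph of a simplicial complex. -/
def oneSkeleton {k : ℕ} (Xf : Finset (Fin k) → Prop) : SimpleGraph (Fin k) where
  Adj i j := i ≠ j ∧ Xf {i, j}
  symm := ⟨fun i j h => ⟨h.1.symm, by rw [Finset.pair_comm]; exact h.2⟩⟩
  loopless := ⟨fun i h => h.1 rfl⟩

/-- Prepend the origin to a tuple of `k - 1` points, obtaining `k` points. -/
def extend0 {d k : ℕ} (y : Fin (k - 1) → Euc d) : Fin k → Euc d :=
  fun i => if h : (i : ℕ) = 0 then 0 else y ⟨(i : ℕ) - 1, by have := i.isLt; omega⟩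

/-- Indicator that the Čech complex at scale `1` on the points `q` is isomorphic to `Xf`. -/
def hIndC {d k : ℕ} (Xf : Finset (Fin k) → Prop) (q : Fin k → Euc d) : ℝ :=
  if ∃ e : Fin k ≃ Fin k, ∀ s : Finset (Fin k), Xf s ↔ cechFace q 1 (s.map e.toEmbedding)
  then 1 else 0

/-- Indicator that the geometric graph at scale `1` on the points `q` is isomorphic to `Γ`. -/
def hIndG {d k : ℕ} (Γ : SimpleGraph (Fin k)) (q : Fin k → Euc d) : ℝ :=
  if ∃ e : Fin k ≃ Fin k, ∀ i j : Fin k, i ≠ j → (Γ.Adj i j ↔ dist (q (e i)) (q (e j)) ≤ 1)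
  then 1 else 0

/-- Strict lexicographic order on `ℝ^d`. -/
def lexLt {d : ℕ} (x y : Euc d) : Prop :=
  ∃ j : Fin d, x j < y j ∧ ∀ l : Fin d, l < j → x l = y l

/-- The lexicographically smallest point among `{p i : i ∈ S}` lies in `A`. -/
def lmpIn {d n : ℕ} (p : Fin n → Euc d) (S : Finset (Fin n)) (A : Set (Euc d)) : Prop :=
  ∃ i₀ ∈ S, p i₀ ∈ A ∧ ∀ j ∈ S, ¬ lexLt (p j) (p i₀)

/-- `S` induces a subgraph of the geometric graph on `p` at scale `r` isomorphic to `Γ`. -/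
def grIsoOn {d n k : ℕ} (Γ : SimpleGraph (Fin k)) (p : Fin n → Euc d) (r : ℝ)
    (S : Finset (Fin n)) : Prop :=
  ∃ g : Fin k ↪ Fin n, Finset.univ.map g = S ∧
    ∀ i j : Fin k, i ≠ j → (Γ.Adj i j ↔ dist (p (g i)) (p (g j)) ≤ r)

/-- No edge of the geometric graph joins `S` to its complement. -/
def grIsolated {d n : ℕ} (p : Fin n → Euc d) (r : ℝ) (S : Finset (Fin n)) : Prop :=
  ∀ a ∈ S, ∀ b ∉ S, ¬ dist (p a) (p b) ≤ r

/-- The geometric graph on the points `x` at scale `r`. -/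
def geomGraph {d k : ℕ} (x : Fin k → Euc d) (r : ℝ) : SimpleGraph (Fin k) where
  Adj i j := i ≠ j ∧ dist (x i) (x j) ≤ r
  symm := ⟨fun i j h => ⟨h.1.symm, by rw [dist_comm]; exact h.2⟩⟩
  loopless := ⟨fun i h => h.1 rfl⟩

/-- The uniform probability measure on `K`. -/
def unifOn (d : ℕ) (K : Set (Euc d)) : Measure (Euc d) :=
  (volume K)⁻¹ • volume.restrict K

/-- The graph with vertex set `Fin n` and adjacency relation `E` has a connected
component isomorphic to `H`. -/
def hasCompIso {n m : ℕ} (H : SimpleGraph (Fin m)) (E : Fin n → Fin n → Prop) : Prop :=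
  ∃ g : Fin m ↪ Fin n,
    (∀ i j : Fin m, i ≠ j → (H.Adj i j ↔ E (g i) (g j))) ∧
    (∀ a b : Fin n, (∃ i, g i = a) → (∀ i, g i ≠ b) → ¬ E a b)

/-- The boundary of the `(k+1)`-dimensional simplex : the complex on `k+2`
vertices whose faces are all proper subsets. -/
def bdrySimplex (k : ℕ) : Finset (Fin (k + 2)) → Prop :=
  fun s => s ≠ Finset.univ

lemma bern_apply_true (p : ℝ) : bern p {true} = ENNReal.ofReal p := by
  simp [bern, Measure.dirac_apply]

lemma bern_apply_false (p : ℝ) : bern p {false} = ENNReal.ofReal (1 - p) := by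
  simp [bern, Measure.dirac_apply]

lemma bern_prob {p : ℝ} (h0 : 0 ≤ p) (h1 : p ≤ 1) : IsProbabilityMeasure (bern p) := by
  constructor
  have : (bern p) Set.univ = ENNReal.ofReal p + ENNReal.ofReal (1 - p) := by
    simp [bern, Measure.dirac_apply]
  rw [this, ← ENNReal.ofReal_add h0 (by linarith)]
  norm_num


def ripsSet (d : ℕ) {n : ℕ} (r : ℝ) (S : Finset (Fin n)) : Set (Fin n → Euc d) :=
  {p | ∀ i ∈ S, ∀ j ∈ S, dist (p i) (p j) ≤ r}

lemma ripsSet_meas (d : ℕ) {n : ℕ} (r : ℝ) (S : Finset (Fin n)) :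
    MeasurableSet (ripsSet d r S) := by
  have h : ripsSet d r S = ⋂ i ∈ S, ⋂ j ∈ S, {p : Fin n → Euc d | dist (p i) (p j) ≤ r} := by
    ext p; simp [ripsSet]
  rw [h]
  exact MeasurableSet.biInter (Set.to_countable _) fun i _ =>
    MeasurableSet.biInter (Set.to_countable _) fun j _ =>
      measurableSet_le ((measurable_pi_apply i).dist (measurable_pi_apply j)) measurable_const

def coinSet {n : ℕ} (S : Finset (Fin n)) : Set (Finset (Fin n) → Bool) :=
  {u | (∀ τ ⊆ S, 2 ≤ τ.card → τ ≠ S → u τ = true) ∧ u S = false}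

lemma coin_measure {n k : ℕ} (ρ : ℕ → ℝ) (hρ : ∀ i, ρ i ∈ Set.Icc (0 : ℝ) 1)
    (S : Finset (Fin n)) (hcard : S.card = k + 2) :
    (Measure.pi fun σ : Finset (Fin n) => bern (ρ (σ.card - 1))) (coinSet S)
      = ENNReal.ofReal (1 - ρ (k + 1)) *
        ∏ i ∈ Finset.Icc 1 k, ENNReal.ofReal (ρ i) ^ Nat.choose (k + 2) (i + 1) := by
  haveI : ∀ σ : Finset (Fin n), IsProbabilityMeasure (bern (ρ (σ.card - 1))) :=
    fun σ => bern_prob (hρ _).1 (hρ _).2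
  set B : Finset (Fin n) → Set Bool := fun σ =>
    if σ = S then {false} else if σ ⊆ S ∧ 2 ≤ σ.card then {true} else Set.univ with hB
  have hset : coinSet S = Set.pi Set.univ B := by
    ext u
    simp only [coinSet, Set.mem_setOf_eq, Set.mem_pi, Set.mem_univ, true_implies, hB]
    constructor
    · rintro ⟨h1, h2⟩ σ
      by_cases hσ : σ = S
      · rw [if_pos hσ, hσ]; exact h2
      · by_cases hσ2 : σ ⊆ S ∧ 2 ≤ σ.card
        · rw [if_neg hσ, if_pos hσ2]; exact h1 σ hσ2.1 hσ2.2 hσ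
        · rw [if_neg hσ, if_neg hσ2]; trivial
    · intro h
      constructor
      · intro τ hτ h2 hne
        have := h τ
        rwa [if_neg hne, if_pos ⟨hτ, h2⟩] at this
      · have := h S
        rwa [if_pos rfl] at this
  rw [hset, Measure.pi_pi]
  set F : Finset (Finset (Fin n)) := S.powerset.filter (fun τ => 2 ≤ τ.card) with hF
  have hSF : S ∈ F := by
    simp only [hF, Finset.mem_filter, Finset.mem_powerset]
    exact ⟨Finset.Subset.refl S, by omega⟩
  have h1 : ∏ σ : Finset (Fin n), (bern (ρ (σ.card - 1))) (B σ)
      = ∏ σ ∈ F, (bern (ρ (σ.card - 1))) (B σ) := by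
    refine (Finset.prod_subset (Finset.subset_univ F) ?_).symm
    intro σ _ hσ
    have hne : σ ≠ S := fun h => hσ (h ▸ hSF)
    have hcond : ¬ (σ ⊆ S ∧ 2 ≤ σ.card) := by
      intro hc
      exact hσ (by simp only [hF, Finset.mem_filter, Finset.mem_powerset]; exact hc)
    rw [hB]; simp only []
    rw [if_neg hne, if_neg hcond]
    exact measure_univ
  rw [h1, ← Finset.mul_prod_erase F _ hSF]
  have hBS : (bern (ρ (S.card - 1))) (B S) = ENNReal.ofReal (1 - ρ (k + 1)) := by
    rw [hB]; simp only []
    rw [if_pos trivial, bern_apply_false, hcard]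
    norm_num
  rw [hBS]
  congr 1
  have hval : ∀ σ ∈ F.erase S,
      (bern (ρ (σ.card - 1))) (B σ) = ENNReal.ofReal (ρ (σ.card - 1)) := by
    intro σ hσ
    obtain ⟨hne, hFm⟩ := Finset.mem_erase.1 hσ
    simp only [hF, Finset.mem_filter, Finset.mem_powerset] at hFm
    rw [hB]; simp only []
    rw [if_neg hne, if_pos hFm, bern_apply_true]
  rw [Finset.prod_congr rfl hval]
  have hmaps : ∀ σ ∈ F.erase S, σ.card ∈ Finset.Icc 2 (k + 1) := by
    intro σ hσ
    obtain ⟨hne, hFm⟩ := Finset.mem_erase.1 hσ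
    simp only [hF, Finset.mem_filter, Finset.mem_powerset] at hFm
    have hlt : σ.card < S.card := Finset.card_lt_card (lt_of_le_of_ne hFm.1 hne)
    rw [Finset.mem_Icc]
    omega
  rw [← Finset.prod_fiberwise_of_maps_to hmaps (fun σ => ENNReal.ofReal (ρ (σ.card - 1)))]
  have hfib : ∀ c ∈ Finset.Icc 2 (k + 1),
      ∏ σ ∈ (F.erase S).filter (fun σ => σ.card = c), ENNReal.ofReal (ρ (σ.card - 1))
        = ENNReal.ofReal (ρ (c - 1)) ^ Nat.choose (k + 2) c := by
    intro c hc
    rw [Finset.mem_Icc] at hc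
    have heq : (F.erase S).filter (fun σ => σ.card = c) = S.powersetCard c := by
      ext σ
      simp only [Finset.mem_filter, Finset.mem_erase, hF, Finset.mem_powerset,
        Finset.mem_powersetCard]
      constructor
      · rintro ⟨⟨hne, hsub, h2⟩, hcc⟩; exact ⟨hsub, hcc⟩
      · rintro ⟨hsub, hcc⟩
        refine ⟨⟨?_, hsub, by omega⟩, hcc⟩
        intro h
        rw [h, hcard] at hcc
        omega
    rw [heq, Finset.prod_congr rfl (fun σ hσ => by
        rw [(Finset.mem_powersetCard.1 hσ).2]),
      Finset.prod_const, Finset.card_powersetCard, hcard]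
  rw [Finset.prod_congr rfl hfib]
  have hicc : Finset.Icc 2 (k + 1) = (Finset.Icc 1 k).map (addRightEmbedding 1) := by
    rw [Finset.map_add_right_Icc]
  rw [hicc, Finset.prod_map]
  apply Finset.prod_congr rfl
  intro i _
  simp [addRightEmbedding]

lemma spannedIso_iff {d k n : ℕ} (hk : 1 ≤ k) (p : Fin n → Euc d) {r : ℝ} (hr : 0 < r)
    (u : Finset (Fin n) → Bool) (S : Finset (Fin n)) :
    spannedIso (bdrySimplex k) (softFace (ripsFace p r) u) S ↔
      S.card = k + 2 ∧ (∀ i ∈ S, ∀ j ∈ S, dist (p i) (p j) ≤ r) ∧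
      (∀ τ ⊆ S, 2 ≤ τ.card → τ ≠ S → u τ = true) ∧ u S = false := by
  constructor
  · rintro ⟨g, hg, hiff⟩
    have hcard : S.card = k + 2 := by
      rw [← hg]; simp
    have hmem : ∀ i, i ∈ S ↔ ∃ a, g a = i := by
      intro i; rw [← hg]; simp
    have hR : ∀ i ∈ S, ∀ j ∈ S, dist (p i) (p j) ≤ r := by
      intro i hi j hj
      obtain ⟨a, rfl⟩ := (hmem i).1 hi
      obtain ⟨b, rfl⟩ := (hmem j).1 hj
      by_cases hab : a = b
      · subst hab; simp [hr.le]
      · have hne : ({a, b} : Finset (Fin (k + 2))) ≠ Finset.univ := by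
          intro h
          have h2 : ({a, b} : Finset (Fin (k + 2))).card ≤ 2 :=
            (Finset.card_insert_le a {b}).trans (by simp)
          rw [h] at h2
          simp [Finset.card_univ] at h2
          omega
        have hC := (hiff {a, b}).1 hne
        exact hC.1 (g a) (Finset.mem_map_of_mem g (by simp)) (g b) (Finset.mem_map_of_mem g (by simp))
    have hcoin : ∀ τ ⊆ S, 2 ≤ τ.card → τ ≠ S → u τ = true := by
      intro τ hτS h2 hne
      have hinj : Set.InjOn g (g ⁻¹' ↑τ) := g.injective.injOn
      set s : Finset (Fin (k + 2)) := τ.preimage g hinj with hs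
      have hmap : s.map g = τ := by
        rw [Finset.map_eq_image, hs, Finset.image_preimage]
        apply Finset.filter_true_of_mem
        intro x hx
        exact (hmem x).1 (hτS hx)
      have hsne : s ≠ Finset.univ := by
        intro h
        apply hne
        rw [← hmap, h, hg]
      have hC := (hiff s).1 hsne
      rw [hmap] at hC
      exact hC.2 τ (Finset.Subset.refl τ) h2
    have huS : u S = false := by
      by_contra h
      have hTrue : u S = true := by simpa using h
      have hCS : softFace (ripsFace p r) u S := by
        refine ⟨hR, fun τ hτ h2 => ?_⟩
        by_cases hτS : τ = S
        · rw [hτS]; exact hTrue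
        · exact hcoin τ hτ h2 hτS
      have := (hiff Finset.univ).2 (by rw [hg]; exact hCS)
      exact this rfl
    exact ⟨hcard, hR, hcoin, huS⟩
  · rintro ⟨hcard, hR, hcoin, huS⟩
    have hg : Finset.univ.map (S.orderEmbOfFin hcard).toEmbedding = S := by
      ext i
      simp only [Finset.mem_map, Finset.mem_univ, true_and, RelEmbedding.coe_toEmbedding]
      constructor
      · rintro ⟨a, rfl⟩
        have : (S.orderEmbOfFin hcard) a ∈ Set.range ⇑(S.orderEmbOfFin hcard) := ⟨a, rfl⟩
        rw [S.range_orderEmbOfFin hcard] at this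
        exact this
      · intro hi
        have : i ∈ Set.range ⇑(S.orderEmbOfFin hcard) := by
          rw [S.range_orderEmbOfFin hcard]; exact hi
        exact this
    refine ⟨(S.orderEmbOfFin hcard).toEmbedding, hg, ?_⟩
    intro s
    constructor
    · intro hs
      have hsub : s.map (S.orderEmbOfFin hcard).toEmbedding ⊆ S := by
        have h' : s.map (S.orderEmbOfFin hcard).toEmbedding ⊆
            Finset.univ.map (S.orderEmbOfFin hcard).toEmbedding :=
          Finset.map_subset_map.mpr (Finset.subset_univ s)
        rwa [hg] at h'
      have hslt : s.card < k + 2 := by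
        have := Finset.card_lt_card (Finset.ssubset_univ_iff.2 hs)
        simpa [Finset.card_univ] using this
      refine ⟨fun i hi j hj => hR i (hsub hi) j (hsub hj), fun τ hτ h2 => ?_⟩
      refine hcoin τ (hτ.trans hsub) h2 ?_
      intro hτS
      have h1 : τ.card ≤ s.card := by
        have := Finset.card_le_card hτ
        rwa [Finset.card_map] at this
      rw [hτS, hcard] at h1
      omega
    · intro hC
      intro hsu
      rw [hsu, hg] at hC
      have := hC.2 S (Finset.Subset.refl S) (by omega)
      rw [huS] at this
      exact Bool.noConfusion this


/-!
STATEMENT 5: For `k ≥ 1`, `n ≥ k+2`, `r > 0` and a probability vector `ρ`, the expected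
number of `(k+2)`-element subsets whose spanned subcomplex in `R(n,r,ρ)` is isomorphic to
`∂Δ^{k+1}` equals `(1 - ρ_{k+1}) ∏_{i=1}^{k} ρᵢ^{C(k+2, i+1)}` times the expected number of
`(k+2)`-element subsets which span a full `(k+1)`-simplex in `R(n,r)`.
-/

theorem stmt_5 (d : ℕ) (hd : 1 ≤ d) (f : Euc d → ℝ)
    (hf_meas : Measurable f) (hf_nonneg : ∀ x, 0 ≤ f x)
    (hf_bdd : ∃ M : ℝ, ∀ x, f x ≤ M)
    (hf_prob : IsProbabilityMeasure (densMeasure d f))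
    (k : ℕ) (hk : 1 ≤ k) (n : ℕ) (hn : k + 2 ≤ n) (r : ℝ) (hr : 0 < r)
    (ρ : ℕ → ℝ) (hρ : ∀ i, ρ i ∈ Set.Icc (0 : ℝ) 1) :
    (∫ ω : (Fin n → Euc d) × (Finset (Fin n) → Bool),
        (countIso (bdrySimplex k) (softFace (ripsFace ω.1 r) ω.2) : ℝ) ∂(softMeasure d f n ρ))
      = (1 - ρ (k + 1)) * (∏ i ∈ Finset.Icc 1 k, ρ i ^ Nat.choose (k + 2) (i + 1)) *
        (∫ p : Fin n → Euc d,
          ((Set.ncard {S : Finset (Fin n) | S.card = k + 2 ∧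
              ∀ i ∈ S, ∀ j ∈ S, dist (p i) (p j) ≤ r} : ℕ) : ℝ) ∂(ptsMeasure d f n)) := by
  classical
  haveI := hf_prob
  haveI hPts : IsProbabilityMeasure (ptsMeasure d f n) := by
    unfold ptsMeasure; infer_instance
  haveI hBern : ∀ σ : Finset (Fin n), IsProbabilityMeasure (bern (ρ (σ.card - 1))) :=
    fun σ => bern_prob (hρ _).1 (hρ _).2
  set ν : Measure (Finset (Fin n) → Bool) :=
    Measure.pi fun σ : Finset (Fin n) => bern (ρ (σ.card - 1)) with hν
  haveI hνP : IsProbabilityMeasure ν := by rw [hν]; infer_instance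
  haveI hμP : IsProbabilityMeasure (softMeasure d f n ρ) := by
    unfold softMeasure; infer_instance
  set c : ℝ≥0∞ := ENNReal.ofReal (1 - ρ (k + 1)) *
    ∏ i ∈ Finset.Icc 1 k, ENNReal.ofReal (ρ i) ^ Nat.choose (k + 2) (i + 1) with hc
  have hpt1 : (fun ω : (Fin n → Euc d) × (Finset (Fin n) → Bool) =>
      (countIso (bdrySimplex k) (softFace (ripsFace ω.1 r) ω.2) : ℝ))
      = fun ω => ∑ S : Finset (Fin n), if S.card = k + 2
          then ((ripsSet d r S) ×ˢ (coinSet S)).indicator (fun _ => (1:ℝ)) ω else 0 := by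
    funext ω
    have hs : {S : Finset (Fin n) | spannedIso (bdrySimplex k) (softFace (ripsFace ω.1 r) ω.2) S}
        = {S | S.card = k + 2 ∧ (ω.1 ∈ ripsSet d r S ∧ ω.2 ∈ coinSet S)} := by
      ext S
      rw [Set.mem_setOf_eq, Set.mem_setOf_eq, spannedIso_iff hk ω.1 hr ω.2 S]
      constructor
      · rintro ⟨h1, h2, h3, h4⟩; exact ⟨h1, h2, h3, h4⟩
      · rintro ⟨h1, h2, h3, h4⟩; exact ⟨h1, h2, h3, h4⟩
    rw [countIso, hs, Set.ncard_eq_toFinset_card', Set.toFinset_setOf, Finset.card_filter]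
    push_cast
    apply Finset.sum_congr rfl
    intro S _
    by_cases h1 : S.card = k + 2 <;>
      by_cases h2 : ω.1 ∈ ripsSet d r S <;>
        by_cases h3 : ω.2 ∈ coinSet S <;>
          simp [h1, h2, h3, Set.indicator_apply, Set.mem_prod]
  have hint1 : ∀ S ∈ (Finset.univ : Finset (Finset (Fin n))),
      Integrable (fun ω : (Fin n → Euc d) × (Finset (Fin n) → Bool) =>
        if S.card = k + 2
          then ((ripsSet d r S) ×ˢ (coinSet S)).indicator (fun _ => (1:ℝ)) ω else 0)
        (softMeasure d f n ρ) := by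
    intro S _
    by_cases h1 : S.card = k + 2
    · simp only [if_pos h1]
      exact (integrable_const (1:ℝ)).indicator
        ((ripsSet_meas d r S).prod ((Set.toFinite _).measurableSet))
    · simp only [if_neg h1]
      exact integrable_zero _ _ _
  rw [hpt1, integral_finset_sum Finset.univ hint1]
  have hterm : ∀ S : Finset (Fin n),
      (∫ ω : (Fin n → Euc d) × (Finset (Fin n) → Bool),
        (if S.card = k + 2
          then ((ripsSet d r S) ×ˢ (coinSet S)).indicator (fun _ => (1:ℝ)) ω else 0)
        ∂(softMeasure d f n ρ))
      = if S.card = k + 2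
          then c.toReal * ((ptsMeasure d f n) (ripsSet d r S)).toReal else 0 := by
    intro S
    by_cases h1 : S.card = k + 2
    · simp only [if_pos h1]
      rw [integral_indicator_const (1:ℝ)
        ((ripsSet_meas d r S).prod ((Set.toFinite _).measurableSet))]
      rw [smul_eq_mul, mul_one, measureReal_def]
      have hprod : softMeasure d f n ρ ((ripsSet d r S) ×ˢ (coinSet S))
          = (ptsMeasure d f n) (ripsSet d r S) * ν (coinSet S) := by
        unfold softMeasure
        exact Measure.prod_prod _ _
      rw [hprod, hν, coin_measure ρ hρ S h1, ← hc, ENNReal.toReal_mul]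
      ring
    · simp only [if_neg h1, integral_zero]
  rw [Finset.sum_congr rfl (fun S _ => hterm S)]
  have hpt2 : (fun p : Fin n → Euc d =>
      ((Set.ncard {S : Finset (Fin n) | S.card = k + 2 ∧
          ∀ i ∈ S, ∀ j ∈ S, dist (p i) (p j) ≤ r} : ℕ) : ℝ))
      = fun p => ∑ S : Finset (Fin n), if S.card = k + 2
          then (ripsSet d r S).indicator (fun _ => (1:ℝ)) p else 0 := by
    funext p
    rw [Set.ncard_eq_toFinset_card', Set.toFinset_setOf, Finset.card_filter]
    push_cast
    apply Finset.sum_congr rfl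
    intro S _
    by_cases h1 : S.card = k + 2 <;>
      by_cases h2 : p ∈ ripsSet d r S <;>
        simp [h1, h2, Set.indicator_apply, ripsSet, Set.mem_setOf_eq]
  have hint2 : ∀ S ∈ (Finset.univ : Finset (Finset (Fin n))),
      Integrable (fun p : Fin n → Euc d =>
        if S.card = k + 2 then (ripsSet d r S).indicator (fun _ => (1:ℝ)) p else 0)
        (ptsMeasure d f n) := by
    intro S _
    by_cases h1 : S.card = k + 2
    · simp only [if_pos h1]
      exact (integrable_const (1:ℝ)).indicator (ripsSet_meas d r S)
    · simp only [if_neg h1]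
      exact integrable_zero _ _ _
  rw [hpt2, integral_finset_sum Finset.univ hint2]
  have hterm2 : ∀ S : Finset (Fin n),
      (∫ p : Fin n → Euc d,
        (if S.card = k + 2 then (ripsSet d r S).indicator (fun _ => (1:ℝ)) p else 0)
        ∂(ptsMeasure d f n))
      = if S.card = k + 2 then ((ptsMeasure d f n) (ripsSet d r S)).toReal else 0 := by
    intro S
    by_cases h1 : S.card = k + 2
    · simp only [if_pos h1]
      rw [integral_indicator_const (1:ℝ) (ripsSet_meas d r S), smul_eq_mul, mul_one, measureReal_def]
    · simp only [if_neg h1, integral_zero]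
  rw [Finset.sum_congr rfl (fun S _ => hterm2 S)]
  have hcreal : c.toReal
      = (1 - ρ (k + 1)) * ∏ i ∈ Finset.Icc 1 k, ρ i ^ Nat.choose (k + 2) (i + 1) := by
    rw [hc, ENNReal.toReal_mul, ENNReal.toReal_ofReal (by linarith [(hρ (k + 1)).2])]
    congr 1
    rw [ENNReal.toReal_prod]
    exact Finset.prod_congr rfl fun i _ => by
      rw [ENNReal.toReal_pow, ENNReal.toReal_ofReal (hρ i).1]
  rw [← hcreal, Finset.mul_sum]
  refine Finset.sum_congr rfl fun S _ => ?_
  by_cases h1 : S.card = k + 2 <;> simp [h1]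
end
end

section
/- For every integer d ≥ 1 there is a constant ε_d > 0 such that the following holds for every r > 0. Let l ≥ 1 and let y_0, y_1, …, y_l ∈ ℝ^d satisfy ‖y_0‖ ≤ ‖y_1‖ ≤ … ≤ ‖y_l‖, r/2 ≤ ‖y_1‖, ‖y_0 − y_1‖ > r, and ‖y_i − y_j‖ ≤ r for every other pair 0 ≤ i < j ≤ l (i.e., for all pairs except {0,1}). Then the set I = ⋂_{i=1}^{l} B(y_i, r) ∩ B(0, ‖y_1‖) has Lebesgue measure at least ε_d · r^d, where B(x, s) denotes the closed ball of radius s centered at x. -/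
open MeasureTheory Filter Metric Asymptotics ProbabilityTheory
open scoped Classical ENNReal

noncomputable section

/-!
STATEMENT 13: (Kahle, Lemma 5.3) For every `d ≥ 1` there is `ε_d > 0` such that for all
`r > 0`, `l ≥ 1`, and points `y_0, …, y_l` with nondecreasing norms, `r/2 ≤ ‖y_1‖`,
`‖y_0 - y_1‖ > r`, and all other pairwise distances at most `r`, the set
`I = ⋂_{i=1}^{l} B(y_i, r) ∩ B(0, ‖y_1‖)` has Lebesgue measure at least `ε_d r^d`.
-/



/-- Arithmetic helper: bound on the distance from the moved point to `y i`. -/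
lemma aux_key (r D t a b x : ℝ) (hr : 0 < r) (hD : r < D) (ht0 : 0 < t)
    (ht4 : t < 1 / 4) (htD : t * D = r / 4) (ha0 : 0 ≤ a) (ha : a ≤ r)
    (hb0 : 0 ≤ b) (hb : b ≤ r) (hx : 0 ≤ x)
    (he : x ^ 2 = (1 - t) * a ^ 2 + t * b ^ 2 - t * (1 - t) * D ^ 2) :
    x ≤ 59 / 64 * r := by
  have hq : t * (1 - t) * D ^ 2 = r / 4 * D - (r / 4) ^ 2 := by
    have hqq : t * (1 - t) * D ^ 2 = (t * D) * D - (t * D) ^ 2 := by ring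
    rw [hqq, htD]
  have h2 : x ^ 2 ≤ 13 / 16 * r ^ 2 := by
    nlinarith [mul_nonneg (by linarith : (0:ℝ) ≤ 1 - t)
        (by nlinarith : (0:ℝ) ≤ r ^ 2 - a ^ 2),
      mul_nonneg ht0.le (by nlinarith : (0:ℝ) ≤ r ^ 2 - b ^ 2)]
  nlinarith

/-- Arithmetic helper: the moved point has norm at most `A`. -/
lemma aux_wA (A B t D x : ℝ) (hB0 : 0 ≤ B) (hB : B ≤ A) (hA : 0 < A)
    (ht0 : 0 < t) (ht4 : t < 1 / 4) (hx : 0 ≤ x)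
    (he : x ^ 2 = (1 - t) * A ^ 2 + t * B ^ 2 - t * (1 - t) * D ^ 2) :
    x ≤ A := by
  have h1 : x ^ 2 ≤ A ^ 2 := by
    nlinarith [mul_nonneg ht0.le (mul_nonneg (sub_nonneg.2 hB)
        (by linarith : (0:ℝ) ≤ A + B)),
      mul_nonneg (mul_nonneg ht0.le (by linarith : (0:ℝ) ≤ 1 - t)) (sq_nonneg D)]
  nlinarith

/-- Quantitative convexity identity for the squared norm of a convex combination. -/
lemma combo_norm_sq {d : ℕ} (u v : Euc d) (t : ℝ) :
    ‖(1 - t) • u + t • v‖ ^ 2 =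
      (1 - t) * ‖u‖ ^ 2 + t * ‖v‖ ^ 2 - t * (1 - t) * ‖u - v‖ ^ 2 := by
  have h1 : ‖(1 - t) • u + t • v‖ ^ 2
      = ‖(1 - t) • u‖ ^ 2 + 2 * inner ℝ ((1 - t) • u) (t • v) + ‖t • v‖ ^ 2 :=
    norm_add_sq_real _ _
  have h2 : ‖u - v‖ ^ 2 = ‖u‖ ^ 2 - 2 * inner ℝ u v + ‖v‖ ^ 2 := norm_sub_sq_real u v
  rw [h1, real_inner_smul_left, real_inner_smul_right, norm_smul, norm_smul,
    Real.norm_eq_abs, Real.norm_eq_abs, mul_pow, mul_pow, sq_abs, sq_abs]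
  nlinarith [h2]

set_option maxHeartbeats 1000000 in
theorem stmt_13 (d : ℕ) (hd : 1 ≤ d) :
    ∃ ε : ℝ, 0 < ε ∧ ∀ r : ℝ, 0 < r → ∀ l : ℕ, 1 ≤ l → ∀ y : ℕ → Euc d,
      (∀ i j : ℕ, i ≤ j → j ≤ l → ‖y i‖ ≤ ‖y j‖) →
      r / 2 ≤ ‖y 1‖ →
      r < dist (y 0) (y 1) →
      (∀ i j : ℕ, i < j → j ≤ l → ¬(i = 0 ∧ j = 1) → dist (y i) (y j) ≤ r) →
      ENNReal.ofReal (ε * r ^ d) ≤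
        volume ((⋂ i ∈ Finset.Icc 1 l, closedBall (y i) r) ∩
          closedBall (0 : Euc d) ‖y 1‖) := by
  classical
  set V : ℝ≥0∞ := volume (ball (0 : Euc d) 1) with hVdef
  have hVpos : 0 < V := measure_ball_pos volume (0 : Euc d) one_pos
  have hVfin : V ≠ ⊤ :=
    ((measure_mono ball_subset_closedBall).trans_lt
      (isCompact_closedBall (0 : Euc d) 1).measure_lt_top).ne
  have hVR : 0 < V.toReal := ENNReal.toReal_pos hVpos.ne' hVfin
  refine ⟨V.toReal / 64 ^ d, by positivity, ?_⟩
  intro r hr l hl y hmono hA hD hdist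
  set A : ℝ := ‖y 1‖ with hAdef
  set D : ℝ := dist (y 0) (y 1) with hDdef
  have hDpos : 0 < D := lt_trans hr hD
  set t : ℝ := r / (4 * D) with htdef
  have ht0 : 0 < t := by positivity
  have htD : t * D = r / 4 := by rw [htdef]; field_simp
  have ht4 : t < 1 / 4 := by
    rw [htdef, div_lt_div_iff₀ (by positivity) (by norm_num)]
    nlinarith
  set w : Euc d := (1 - t) • y 1 + t • y 0 with hwdef
  have hB : ‖y 0‖ ≤ A := hmono 0 1 (by omega) hl
  have hApos : 0 < A := lt_of_lt_of_le (by linarith) hA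
  -- ‖w‖ ≤ A
  have hwsq : ‖w‖ ^ 2 = (1 - t) * A ^ 2 + t * ‖y 0‖ ^ 2 - t * (1 - t) * D ^ 2 := by
    have := combo_norm_sq (y 1) (y 0) t
    rw [hwdef, this, ← hAdef]
    have : ‖y 1 - y 0‖ = D := by rw [hDdef, dist_comm, dist_eq_norm]
    rw [this]
  have hwA : ‖w‖ ≤ A :=
    aux_wA A ‖y 0‖ t D ‖w‖ (norm_nonneg _) hB hApos ht0 ht4 (norm_nonneg _) hwsq
  -- dist w (y 1) = r/4
  have hwy1 : dist w (y 1) = r / 4 := by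
    have : w - y 1 = t • (y 0 - y 1) := by
      rw [hwdef]; rw [smul_sub, sub_smul, one_smul]; abel
    rw [dist_eq_norm, this, norm_smul, Real.norm_eq_abs, abs_of_pos ht0,
      ← dist_eq_norm]
    exact htD
  -- r/4 ≤ ‖w‖
  have hwlb : r / 4 ≤ ‖w‖ := by
    have h := norm_sub_norm_le (y 1) w
    rw [← dist_eq_norm, dist_comm, hwy1] at h
    have : A - ‖w‖ ≤ r / 4 := by rw [hAdef] at *; linarith
    linarith
  have hwpos : 0 < ‖w‖ := by linarith
  set δ : ℝ := r / (32 * ‖w‖) with hδdef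
  have hδ0 : 0 < δ := by positivity
  have hδw : δ * ‖w‖ = r / 32 := by rw [hδdef]; field_simp
  have hδ8 : δ ≤ 1 / 8 := by
    rw [hδdef, div_le_div_iff₀ (by positivity) (by norm_num)]
    nlinarith
  set w' : Euc d := (1 - δ) • w with hw'def
  have hw'w : dist w' w = r / 32 := by
    have : w' - w = (-δ) • w := by
      rw [hw'def, sub_smul, one_smul, neg_smul]; abel
    rw [dist_eq_norm, this, norm_smul, Real.norm_eq_abs, abs_neg, abs_of_pos hδ0, hδw]
  have hw' : ‖w'‖ = ‖w‖ - r / 32 := by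
    rw [hw'def, norm_smul, Real.norm_eq_abs, abs_of_nonneg (by linarith), sub_mul,
      one_mul, hδw]
  -- the small ball is inside the intersection
  have hsub : closedBall w' (r / 64) ⊆
      (⋂ i ∈ Finset.Icc 1 l, closedBall (y i) r) ∩ closedBall (0 : Euc d) ‖y 1‖ := by
    intro z hz
    rw [mem_closedBall] at hz
    constructor
    · simp only [Set.mem_iInter, mem_closedBall]
      intro i hi
      rw [Finset.mem_Icc] at hi
      rcases eq_or_lt_of_le hi.1 with h1 | h2
      · -- i = 1
        rw [← h1]
        calc dist z (y 1) ≤ dist z w' + dist w' w + dist w (y 1) := dist_triangle4 _ _ _ _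
        _ ≤ r / 64 + r / 32 + r / 4 := by rw [hw'w, hwy1]; linarith
        _ ≤ r := by linarith
      · -- 2 ≤ i
        have ha : dist (y 1) (y i) ≤ r := hdist 1 i h2 hi.2 (by omega)
        have hb : dist (y 0) (y i) ≤ r := hdist 0 i (by omega) hi.2 (by omega)
        have hdiff : w - y i = (1 - t) • (y 1 - y i) + t • (y 0 - y i) := by
          rw [hwdef]; module
        have hc := combo_norm_sq (y 1 - y i) (y 0 - y i) t
        have hsub2 : (y 1 - y i) - (y 0 - y i) = y 1 - y 0 := by abel
        rw [hsub2] at hc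
        have e1 : dist w (y i) ^ 2
            = (1 - t) * dist (y 1) (y i) ^ 2 + t * dist (y 0) (y i) ^ 2
              - t * (1 - t) * D ^ 2 := by
          rw [dist_eq_norm, hdiff, hc, dist_eq_norm, dist_eq_norm, hDdef,
            dist_comm (y 0) (y 1), dist_eq_norm]
        have hwi : dist w (y i) ≤ 59 / 64 * r :=
          aux_key r D t (dist (y 1) (y i)) (dist (y 0) (y i)) (dist w (y i))
            hr hD ht0 ht4 htD dist_nonneg ha dist_nonneg hb dist_nonneg e1
        calc dist z (y i) ≤ dist z w' + dist w' w + dist w (y i) := dist_triangle4 _ _ _ _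
        _ ≤ r / 64 + r / 32 + 59 / 64 * r := by rw [hw'w]; linarith
        _ ≤ r := by linarith
    · rw [mem_closedBall_zero_iff]
      have : ‖z‖ ≤ ‖z - w'‖ + ‖w'‖ := by
        calc ‖z‖ = ‖z - w' + w'‖ := by rw [sub_add_cancel]
        _ ≤ ‖z - w'‖ + ‖w'‖ := norm_add_le _ _
      rw [← dist_eq_norm] at this
      rw [hw'] at this
      rw [← hAdef]
      linarith
  -- conclude by computing the volume of the small ball
  refine le_trans ?_ (measure_mono hsub)
  have hball : volume (closedBall w' (r / 64))
      = ENNReal.ofReal ((r / 64) ^ d) * V := by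
    rw [Measure.addHaar_closedBall volume w' (by positivity : (0:ℝ) ≤ r / 64),
      finrank_euclideanSpace_fin]
  rw [hball]
  have heq : V.toReal / 64 ^ d * r ^ d = V.toReal * (r / 64) ^ d := by
    rw [div_pow]; ring
  rw [heq, ENNReal.ofReal_mul ENNReal.toReal_nonneg, ENNReal.ofReal_toReal hVfin,
    mul_comm]
end
end

section
/- For every ε > 0, lim_{n→∞} ∏_{i=1}^{n} (1 − n^{−(2+i+ε)})^{C(n, i+1)} = 1, where C(n, i+1) denotes the binomial coefficient. -/
open Filter

private lemma prod_one_sub_pow_ge {ι : Type*} (s : Finset ι) (x : ι → ℝ) (c : ι → ℕ)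
    (hx0 : ∀ i ∈ s, 0 ≤ x i) (hx1 : ∀ i ∈ s, x i ≤ 1) :
    1 - ∑ i ∈ s, (c i : ℝ) * x i ≤ ∏ i ∈ s, (1 - x i) ^ (c i) := by
  classical
  induction s using Finset.induction_on with
  | empty => simp
  | @insert a s ha ih =>
    rw [Finset.sum_insert ha, Finset.prod_insert ha]
    have hx0a := hx0 a (Finset.mem_insert_self a s)
    have hx1a := hx1 a (Finset.mem_insert_self a s)
    have hP : 1 - ∑ i ∈ s, (c i : ℝ) * x i ≤ ∏ i ∈ s, (1 - x i) ^ (c i) :=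
      ih (fun i hi => hx0 i (Finset.mem_insert_of_mem hi))
        (fun i hi => hx1 i (Finset.mem_insert_of_mem hi))
    have hP0 : (0 : ℝ) ≤ ∏ i ∈ s, (1 - x i) ^ (c i) :=
      Finset.prod_nonneg fun i hi =>
        pow_nonneg (by linarith [hx1 i (Finset.mem_insert_of_mem hi)]) _
    have hf : 1 - (c a : ℝ) * x a ≤ (1 - x a) ^ (c a) := by
      have := one_add_mul_le_pow (a := -x a) (by linarith) (c a)
      rw [mul_neg, ← sub_eq_add_neg, ← sub_eq_add_neg] at this
      simpa [mul_comm] using this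
    have hf0 : (0 : ℝ) ≤ (1 - x a) ^ (c a) := pow_nonneg (by linarith) _
    have hcx : (0 : ℝ) ≤ (c a : ℝ) * x a := mul_nonneg (Nat.cast_nonneg _) hx0a
    have hS : (0 : ℝ) ≤ ∑ i ∈ s, (c i : ℝ) * x i :=
      Finset.sum_nonneg fun i hi =>
        mul_nonneg (Nat.cast_nonneg _) (hx0 i (Finset.mem_insert_of_mem hi))
    rcases le_or_gt (1 - ∑ i ∈ s, (c i : ℝ) * x i) 0 with h | h
    · linarith [mul_nonneg hf0 hP0]
    · have h1 : (1 - (c a : ℝ) * x a) * (1 - ∑ i ∈ s, (c i : ℝ) * x i)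
          ≤ (1 - x a) ^ (c a) * ∏ i ∈ s, (1 - x i) ^ (c i) :=
        mul_le_mul hf hP h.le hf0
      nlinarith [mul_nonneg hcx hS]

theorem stmt_15 (ε : ℝ) (hε : 0 < ε) :
    Tendsto (fun n : ℕ =>
        ∏ i ∈ Finset.Icc 1 n,
          (1 - (n : ℝ) ^ (-(2 + (i : ℝ) + ε))) ^ (Nat.choose n (i + 1)))
      atTop (nhds 1) := by
  have hlow : Tendsto (fun n : ℕ => 1 - (n : ℝ) ^ (-ε)) atTop (nhds 1) := by
    have h0 : Tendsto (fun n : ℕ => (n : ℝ) ^ (-ε)) atTop (nhds 0) :=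
      (tendsto_rpow_neg_atTop hε).comp tendsto_natCast_atTop_atTop
    simpa using tendsto_const_nhds.sub h0
  refine tendsto_of_tendsto_of_tendsto_of_le_of_le' hlow tendsto_const_nhds ?_ ?_
  · filter_upwards [eventually_ge_atTop 1] with n hn
    have hn0 : (0 : ℝ) < (n : ℝ) := by exact_mod_cast hn
    have hn1 : (1 : ℝ) ≤ (n : ℝ) := by exact_mod_cast hn
    -- factors are in [0,1]
    have hx0 : ∀ i ∈ Finset.Icc 1 n, (0 : ℝ) ≤ (n : ℝ) ^ (-(2 + (i : ℝ) + ε)) :=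
      fun i _ => Real.rpow_nonneg hn0.le _
    have hx1 : ∀ i ∈ Finset.Icc 1 n, (n : ℝ) ^ (-(2 + (i : ℝ) + ε)) ≤ 1 :=
      fun i _ => Real.rpow_le_one_of_one_le_of_nonpos hn1
        (by have : (0:ℝ) ≤ (i:ℝ) := Nat.cast_nonneg i; linarith)
    have key := prod_one_sub_pow_ge (Finset.Icc 1 n)
      (fun i => (n : ℝ) ^ (-(2 + (i : ℝ) + ε))) (fun i => Nat.choose n (i + 1)) hx0 hx1
    refine le_trans ?_ key
    have hsum : ∑ i ∈ Finset.Icc 1 n,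
        ((Nat.choose n (i + 1) : ℝ)) * (n : ℝ) ^ (-(2 + (i : ℝ) + ε)) ≤ (n : ℝ) ^ (-ε) := by
      have hterm : ∀ i ∈ Finset.Icc 1 n,
          ((Nat.choose n (i + 1) : ℝ)) * (n : ℝ) ^ (-(2 + (i : ℝ) + ε))
            ≤ (n : ℝ) ^ (-(1 + ε)) := by
        intro i _
        have hc : ((Nat.choose n (i + 1) : ℝ)) ≤ (n : ℝ) ^ ((i : ℝ) + 1) := by
          rw [show ((i : ℝ) + 1) = ((i + 1 : ℕ) : ℝ) by push_cast; ring,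
            Real.rpow_natCast]
          exact_mod_cast Nat.choose_le_pow n (i + 1)
        calc ((Nat.choose n (i + 1) : ℝ)) * (n : ℝ) ^ (-(2 + (i : ℝ) + ε))
            ≤ (n : ℝ) ^ ((i : ℝ) + 1) * (n : ℝ) ^ (-(2 + (i : ℝ) + ε)) := by
              exact mul_le_mul_of_nonneg_right hc (Real.rpow_nonneg hn0.le _)
          _ = (n : ℝ) ^ (-(1 + ε)) := by
              rw [← Real.rpow_add hn0]; ring_nf
      calc ∑ i ∈ Finset.Icc 1 n, ((Nat.choose n (i + 1) : ℝ)) * (n : ℝ) ^ (-(2 + (i : ℝ) + ε))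
          ≤ ∑ _i ∈ Finset.Icc 1 n, (n : ℝ) ^ (-(1 + ε)) := Finset.sum_le_sum hterm
        _ = (n : ℝ) * (n : ℝ) ^ (-(1 + ε)) := by
            rw [Finset.sum_const, Nat.card_Icc]; simp [nsmul_eq_mul]
        _ = (n : ℝ) ^ (-ε) := by
            rw [mul_comm, ← Real.rpow_add_one hn0.ne']; ring_nf
    linarith
  · filter_upwards [eventually_ge_atTop 1] with n hn
    have hn0 : (0 : ℝ) < (n : ℝ) := by exact_mod_cast hn
    have hn1 : (1 : ℝ) ≤ (n : ℝ) := by exact_mod_cast hn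
    refine Finset.prod_le_one (fun i _ => pow_nonneg ?_ _) (fun i _ => pow_le_one₀ ?_ ?_)
    · have := Real.rpow_le_one_of_one_le_of_nonpos hn1
        (show -(2 + (i : ℝ) + ε) ≤ 0 by have : (0:ℝ) ≤ (i:ℝ) := Nat.cast_nonneg i; linarith)
      linarith
    · have := Real.rpow_le_one_of_one_le_of_nonpos hn1
        (show -(2 + (i : ℝ) + ε) ≤ 0 by have : (0:ℝ) ≤ (i:ℝ) := Nat.cast_nonneg i; linarith)
      linarith
    · linarith [Real.rpow_nonneg hn0.le (-(2 + (i : ℝ) + ε))]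
end
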